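/- Suppose μ ∉ (1/2)ℤ and μ ∉ {1/4 + ℤ, 3/4 + ℤ}. Let ψ be a 2-cocycle on L_{λ,μ} with ψ(L_0, Y_n) = ψ(L_0, M_n) = ψ(L_0, L_n) = 0 for all n. Then ψ(M_m, M_n) = 0 for all m, n ∈ ℤ. -/

import Mathlib

/-! If `ad x` acts on `a` and `b` by scalars `α` and `β` and `⁅a, b⁆ = 0`, the cocycle identity for
`(x, a, b)` reads `(α + β) ψ(a, b) = 0`. Taking `x = L₀`, `a = M_m`, `b = M_n` gives
`(m + n + 4μ) ψ(M_m, M_n) = 0`, and the conditions on `μ` say exactly that `4μ ∉ ℤ`. -/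

theorem four_mul_ne_intCast {μ : ℂ}
    (h2 : ∀ k : ℤ, 2 * μ ≠ (k : ℂ))
    (h14 : ∀ k : ℤ, μ ≠ 1 / 4 + (k : ℂ))
    (h34 : ∀ k : ℤ, μ ≠ 3 / 4 + (k : ℂ)) (k : ℤ) :
    4 * μ ≠ (k : ℂ) := by
  intro hk
  obtain ⟨j, rfl | rfl⟩ := Int.even_or_odd' k
  · exact h2 j (by push_cast at hk; linear_combination hk / 2)
  · obtain ⟨i, rfl | rfl⟩ := Int.even_or_odd' j
    · exact h14 i (by push_cast at hk; linear_combination hk / 4)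
    · exact h34 i (by push_cast at hk; linear_combination hk / 4)

theorem mul_cocycle_eq_zero_of_lie_eq_smul {R V : Type*} [CommRing R] [LieRing V]
    [LieAlgebra R V] (ψ : V →ₗ[R] V →ₗ[R] R)
    (hskew : ∀ x y : V, ψ x y = - ψ y x)
    (hcoc : ∀ x y z : V, ψ ⁅x, y⁆ z + ψ ⁅y, z⁆ x + ψ ⁅z, x⁆ y = 0)
    {x a b : V} {α β : R} (ha : ⁅x, a⁆ = α • a) (hb : ⁅x, b⁆ = β • b) (hab : ⁅a, b⁆ = 0) :
    (α + β) * ψ a b = 0 := by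
  have h := hcoc x a b
  rw [ha, hab, ← lie_skew, hb] at h
  simp only [map_zero, map_smul, map_neg, LinearMap.zero_apply, LinearMap.smul_apply,
    LinearMap.neg_apply, smul_eq_mul] at h
  linear_combination h + β * hskew b a

theorem stmt_6_general (lam mu : ℂ)
    (hmu2 : ∀ k : ℤ, 2 * mu ≠ (k : ℂ))
    (hmu14 : ∀ k : ℤ, mu ≠ 1 / 4 + (k : ℂ))
    (hmu34 : ∀ k : ℤ, mu ≠ 3 / 4 + (k : ℂ))
    (V : Type*) [LieRing V] [LieAlgebra ℂ V]
    (L M : ℤ → V)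
    (hLM : ∀ n m : ℤ, ⁅L n, M m⁆ = ((m : ℂ) - lam * n + 2 * mu) • M (m + n))
    (hMMbr : ∀ n m : ℤ, ⁅M n, M m⁆ = 0)
    (ψ : V →ₗ[ℂ] V →ₗ[ℂ] ℂ)
    (hskew : ∀ x y : V, ψ x y = - ψ y x)
    (hcoc : ∀ x y z : V, ψ ⁅x, y⁆ z + ψ ⁅y, z⁆ x + ψ ⁅z, x⁆ y = 0) :
    ∀ m n : ℤ, ψ (M m) (M n) = 0 := by
  intro m n
  have hL₀ (k : ℤ) : ⁅L 0, M k⁆ = ((k : ℂ) + 2 * mu) • M k := by simpa using hLM 0 k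
  have h := mul_cocycle_eq_zero_of_lie_eq_smul ψ hskew hcoc (hL₀ m) (hL₀ n) (hMMbr m n)
  have hne : (m : ℂ) + 2 * mu + (n + 2 * mu) ≠ 0 := fun h0 =>
    four_mul_ne_intCast hmu2 hmu14 hmu34 (-(m + n)) (by push_cast; linear_combination h0)
  exact (mul_eq_zero.mp h).resolve_left hne

theorem stmt_6 (lam mu : ℂ)
    (hmu2 : ∀ k : ℤ, 2 * mu ≠ (k : ℂ))
    (hmu14 : ∀ k : ℤ, mu ≠ 1 / 4 + (k : ℂ))
    (hmu34 : ∀ k : ℤ, mu ≠ 3 / 4 + (k : ℂ))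
    (V : Type*) [LieRing V] [LieAlgebra ℂ V]
    (L Y M : ℤ → V)
    (hLL : ∀ n m : ℤ, ⁅L n, L m⁆ = ((m : ℂ) - n) • L (m + n))
    (hLY : ∀ n m : ℤ, ⁅L n, Y m⁆ = ((m : ℂ) - (lam + 1) * n / 2 + mu) • Y (m + n))
    (hYY : ∀ n m : ℤ, ⁅Y n, Y m⁆ = ((m : ℂ) - n) • M (m + n))
    (hLM : ∀ n m : ℤ, ⁅L n, M m⁆ = ((m : ℂ) - lam * n + 2 * mu) • M (m + n))
    (hYMbr : ∀ n m : ℤ, ⁅Y n, M m⁆ = 0)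
    (hMMbr : ∀ n m : ℤ, ⁅M n, M m⁆ = 0)
    (ψ : V →ₗ[ℂ] V →ₗ[ℂ] ℂ)
    (hskew : ∀ x y : V, ψ x y = - ψ y x)
    (hcoc : ∀ x y z : V, ψ ⁅x, y⁆ z + ψ ⁅y, z⁆ x + ψ ⁅z, x⁆ y = 0)
    (h0Y : ∀ n : ℤ, ψ (L 0) (Y n) = 0)
    (h0M : ∀ n : ℤ, ψ (L 0) (M n) = 0)
    (h0L : ∀ n : ℤ, ψ (L 0) (L n) = 0) :
    ∀ m n : ℤ, ψ (M m) (M n) = 0 :=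
  stmt_6_general lam mu hmu2 hmu14 hmu34 V L M hLM hMMbr ψ hskew hcoc
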